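/- arXiv:2103.04187 — 3 statements merged into one kernel-verified Lean document; each statement's English description precedes it below -/
import Mathlib

section
/- Commutators of the infinitesimal generators of shift and constant tilt behave like those of shift and tilt on polynomials: as operators on ℝ[[z_k,z_𝐧]] one has (a) [D^(𝐧), D^(𝐧′)] = 0 for all 𝐧, 𝐧′ ∈ ℕ² (including the cases involving D^(0)); (b) [∂₁, ∂₂] = 0; (c) [D^(𝐧), ∂₁] = n₁·D^(𝐧−(1,0)) for all 𝐧 ∈ ℕ², with the understanding that the right-hand side is 0 when n₁ = 0, and symmetrically [D^(𝐧), ∂₂] = n₂·D^(𝐧−(0,1)). -/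
/-!
Each operator in the statement acts on coefficients as a locally finite sum
`Σ_a c_a z^{ν_a} ∂_{z_a}`, so every coefficient of its output is a finite combination of
coefficients of its input. Such an operator is determined by its values on polynomials, where it
is the derivation sending `z_a` to `c_a z^{ν_a}`, and composites and differences of such
operators are again of this kind. Each identity therefore reduces to the same identity between
derivations of the polynomial ring; a commutator of derivations is a derivation, hence determined
by its values on the variables, where the identities are short computations.
-/

open MvPolynomial

abbrev N2 : Type := {p : ℕ × ℕ // p ≠ (0, 0)}
abbrev Idx : Type := ℕ ⊕ N2
abbrev MIdx : Type := Idx →₀ ℕ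
abbrev PS : Type := MvPowerSeries Idx ℝ

noncomputable section

/-- the weight `|𝐧| = w₁ n₁ + w₂ n₂` of `𝐧 ∈ ℕ²`. -/
def wt (w₁ w₂ : ℝ) (n : ℕ × ℕ) : ℝ := w₁ * n.1 + w₂ * n.2

/-- `[γ] = Σ_k k γ(k) − Σ_{𝐧≠0} γ(𝐧)`. -/
def brk (γ : MIdx) : ℤ :=
  γ.sum fun i n =>
    match i with
    | Sum.inl k => (k : ℤ) * n
    | Sum.inr _ => -(n : ℤ)

/-- `Σ_{𝐦≠0} |𝐦| γ(𝐦)`. -/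
def wsum (w₁ w₂ : ℝ) (γ : MIdx) : ℝ :=
  γ.sum fun i n =>
    match i with
    | Sum.inl _ => 0
    | Sum.inr m => wt w₁ w₂ m.1 * n

/-- the homogeneity `|γ| = α([γ]+1) + Σ_{𝐧≠0}|𝐧|γ(𝐧)`. -/
def homdeg (α w₁ w₂ : ℝ) (γ : MIdx) : ℝ := α * ((brk γ : ℝ) + 1) + wsum w₁ w₂ γ

/-! ### operators on monomials (polynomial level) -/

/-- `D^(0) z^γ = Σ_k (k+1) γ(k) z^{γ - e_k + e_{k+1}}`. -/
def D0mono (γ : MIdx) : MvPolynomial Idx ℝ :=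
  γ.sum fun i n =>
    match i with
    | Sum.inl k =>
        (((k + 1) * n : ℕ) : ℝ) •
          monomial (γ - Finsupp.single (Sum.inl k) 1 + Finsupp.single (Sum.inl (k + 1)) 1) 1
    | Sum.inr _ => 0

/-- `D^(𝐧) z^γ = ∂_{z_𝐧} z^γ` for `𝐧 ≠ 0`. -/
def DNmono (m : N2) (γ : MIdx) : MvPolynomial Idx ℝ :=
  ((γ (Sum.inr m) : ℕ) : ℝ) • monomial (γ - Finsupp.single (Sum.inr m) 1) 1

/-- `D^(𝐧) z^γ` for arbitrary `𝐧 ∈ ℕ²`. -/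
def Dmono (n : ℕ × ℕ) (γ : MIdx) : MvPolynomial Idx ℝ :=
  if h : n = (0, 0) then D0mono γ else DNmono ⟨n, h⟩ γ

lemma add10_ne (n : ℕ × ℕ) : n + (1, 0) ≠ (0, 0) := by
  intro h
  exact Nat.succ_ne_zero n.1 (congrArg Prod.fst h)

lemma add01_ne (n : ℕ × ℕ) : n + (0, 1) ≠ (0, 0) := by
  intro h
  exact Nat.succ_ne_zero n.2 (congrArg Prod.snd h)

def v10 : N2 := ⟨(1, 0), by decide⟩
def v01 : N2 := ⟨(0, 1), by decide⟩

/-- `∂₁ z^γ = z_{(1,0)} D^(0) z^γ + Σ_{𝐧≠0} (n₁+1) z_{𝐧+(1,0)} ∂_{z_𝐧} z^γ`. -/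
def d1mono (γ : MIdx) : MvPolynomial Idx ℝ :=
  X (Sum.inr v10) * D0mono γ +
    γ.sum fun i n =>
      match i with
      | Sum.inl _ => 0
      | Sum.inr m =>
          (((m.1.1 + 1) * n : ℕ) : ℝ) •
            monomial
              (γ - Finsupp.single (Sum.inr m) 1 +
                Finsupp.single (Sum.inr ⟨m.1 + (1, 0), add10_ne m.1⟩) 1) 1

/-- `∂₂ z^γ`. -/
def d2mono (γ : MIdx) : MvPolynomial Idx ℝ :=
  X (Sum.inr v01) * D0mono γ +
    γ.sum fun i n =>
      match i with
      | Sum.inl _ => 0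
      | Sum.inr m =>
          (((m.1.2 + 1) * n : ℕ) : ℝ) •
            monomial
              (γ - Finsupp.single (Sum.inr m) 1 +
                Finsupp.single (Sum.inr ⟨m.1 + (0, 1), add01_ne m.1⟩) 1) 1

/-! ### operators on power series (coefficientwise) -/

/-- coefficient of `D^(0) f` at `β`. -/
def D0coeff (f : PS) (β : MIdx) : ℝ :=
  ∑ i ∈ β.support,
    match i with
    | Sum.inl (k + 1) =>
        (((k + 1) * (β (Sum.inl k) + 1) : ℕ) : ℝ) *
          MvPowerSeries.coeff (R := ℝ)
            (β + Finsupp.single (Sum.inl k) 1 - Finsupp.single (Sum.inl (k + 1)) 1) f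
    | _ => 0

/-- `D^(0)` on power series. -/
def D0series (f : PS) : PS := D0coeff f

/-- `D^(𝐧) = ∂_{z_𝐧}` on power series, `𝐧 ≠ 0`. -/
def DNseries (m : N2) (f : PS) : PS :=
  fun β => ((β (Sum.inr m) + 1 : ℕ) : ℝ) *
    MvPowerSeries.coeff (R := ℝ) (β + Finsupp.single (Sum.inr m) 1) f

/-- `D^(𝐧)` on power series for arbitrary `𝐧 ∈ ℕ²`. -/
def Dseries (n : ℕ × ℕ) (f : PS) : PS :=
  if h : n = (0, 0) then D0series f else DNseries ⟨n, h⟩ f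

/-- coefficient of `∂₁ f` at `β`. -/
def d1coeff (f : PS) (β : MIdx) : ℝ :=
  (if 1 ≤ β (Sum.inr v10) then D0coeff f (β - Finsupp.single (Sum.inr v10) 1) else 0) +
    ∑ i ∈ β.support,
      match i with
      | Sum.inl _ => 0
      | Sum.inr p =>
          if hp : ((p.1.1 - 1, p.1.2) : ℕ × ℕ) ≠ (0, 0) ∧ 1 ≤ p.1.1 then
            (p.1.1 : ℝ) *
              ((((β - Finsupp.single (Sum.inr p) 1 : MIdx) (Sum.inr ⟨(p.1.1 - 1, p.1.2), hp.1⟩) : ℕ) + 1 : ℕ) : ℝ) *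
              MvPowerSeries.coeff (R := ℝ)
                (β - Finsupp.single (Sum.inr p) 1 +
                  Finsupp.single (Sum.inr ⟨(p.1.1 - 1, p.1.2), hp.1⟩) 1) f
          else 0

/-- `∂₁` on power series. -/
def d1series (f : PS) : PS := d1coeff f

/-- coefficient of `∂₂ f` at `β`. -/
def d2coeff (f : PS) (β : MIdx) : ℝ :=
  (if 1 ≤ β (Sum.inr v01) then D0coeff f (β - Finsupp.single (Sum.inr v01) 1) else 0) +
    ∑ i ∈ β.support,
      match i with
      | Sum.inl _ => 0
      | Sum.inr p =>
          if hp : ((p.1.1, p.1.2 - 1) : ℕ × ℕ) ≠ (0, 0) ∧ 1 ≤ p.1.2 then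
            (p.1.2 : ℝ) *
              ((((β - Finsupp.single (Sum.inr p) 1 : MIdx) (Sum.inr ⟨(p.1.1, p.1.2 - 1), hp.1⟩) : ℕ) + 1 : ℕ) : ℝ) *
              MvPowerSeries.coeff (R := ℝ)
                (β - Finsupp.single (Sum.inr p) 1 +
                  Finsupp.single (Sum.inr ⟨(p.1.1, p.1.2 - 1), hp.1⟩) 1) f
          else 0

/-- `∂₂` on power series. -/
def d2series (f : PS) : PS := d2coeff f

/-- the operator `z^γ·D^(𝐧)` on power series. -/
def opOf (γ : MIdx) (n : ℕ × ℕ) (f : PS) : PS :=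
  MvPowerSeries.monomial (R := ℝ) γ 1 * Dseries n f

/-- the dual model space `T̃*`. -/
def Ttilde : Set PS := {f | ∀ γ : MIdx, MvPowerSeries.coeff (R := ℝ) γ f ≠ 0 → 0 ≤ brk γ}

/-- the dual model space `T*`. -/
def Tstar : Set PS :=
  {f | ∀ γ : MIdx, MvPowerSeries.coeff (R := ℝ) γ f ≠ 0 →
      0 ≤ brk γ ∨ ∃ m : N2, γ = Finsupp.single (Sum.inr m) 1}

/-! ### topology and the realization property -/

instance : TopologicalSpace PS := inferInstanceAs (TopologicalSpace ((Idx →₀ ℕ) → ℝ))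

/-- `Γ` realizes the family `(π^(𝐧))_{𝐧∈ℕ²}`. -/
def Realizes (Γ : PS →ₐ[ℝ] PS) (π : ℕ × ℕ → PS) : Prop :=
  Continuous Γ ∧
    (∀ m : N2, Γ (MvPowerSeries.X (Sum.inr m)) = MvPowerSeries.X (Sum.inr m) + π m.1) ∧
    (∀ k : ℕ, HasSum
      (fun l : ℕ => ((k + l).choose k : ℝ) • (π (0, 0) ^ l * MvPowerSeries.X (Sum.inl (k + l))))
      (Γ (MvPowerSeries.X (Sum.inl k))))

end

section CoeffwiseExtension

variable {σ R : Type*} [CommRing R]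

def IsCoeffwiseFinite (L : MvPowerSeries σ R → MvPowerSeries σ R) : Prop :=
  ∀ β, ∃ S : Finset (σ →₀ ℕ), ∀ f g : MvPowerSeries σ R,
    (∀ γ ∈ S, MvPowerSeries.coeff γ f = MvPowerSeries.coeff γ g) →
      MvPowerSeries.coeff β (L f) = MvPowerSeries.coeff β (L g)

def IsSeriesExtension (L : MvPowerSeries σ R → MvPowerSeries σ R)
    (D : MvPolynomial σ R → MvPolynomial σ R) : Prop :=
  IsCoeffwiseFinite L ∧ ∀ p : MvPolynomial σ R, L p = D p

namespace IsSeriesExtension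

variable {L L' : MvPowerSeries σ R → MvPowerSeries σ R}
  {D D' : MvPolynomial σ R → MvPolynomial σ R}

theorem comp [DecidableEq σ] (h : IsSeriesExtension L D) (h' : IsSeriesExtension L' D') :
    IsSeriesExtension (L ∘ L') (D ∘ D') := by
  refine ⟨fun β => ?_, fun p => by simp only [Function.comp_apply, h'.2, h.2]⟩
  obtain ⟨S, hS⟩ := h.1 β
  choose S' hS' using h'.1
  exact ⟨S.biUnion S', fun f g hfg => hS _ _ fun γ hγ =>
    hS' γ f g fun δ hδ => hfg δ (Finset.mem_biUnion.2 ⟨γ, hγ, hδ⟩)⟩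

theorem sub [DecidableEq σ] (h : IsSeriesExtension L D) (h' : IsSeriesExtension L' D') :
    IsSeriesExtension (fun f => L f - L' f) (fun p => D p - D' p) := by
  refine ⟨fun β => ?_, fun p => ?_⟩
  · obtain ⟨S, hS⟩ := h.1 β
    obtain ⟨S', hS'⟩ := h'.1 β
    refine ⟨S ∪ S', fun f g hfg => ?_⟩
    simp only [map_sub]
    rw [hS f g fun γ hγ => hfg γ (Finset.mem_union_left _ hγ),
      hS' f g fun γ hγ => hfg γ (Finset.mem_union_right _ hγ)]
  · ext β
    simp [h.2, h'.2, MvPolynomial.coeff_coe]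

theorem smul (h : IsSeriesExtension L D) (r : R) :
    IsSeriesExtension (fun f => r • L f) (fun p => r • D p) := by
  refine ⟨fun β => ?_, fun p => by simp only [h.2, MvPolynomial.coe_smul]⟩
  obtain ⟨S, hS⟩ := h.1 β
  exact ⟨S, fun f g hfg => by simp only [map_smul, hS f g hfg]⟩

/-- A coefficient of `L f` only sees a truncation of `f`, which is a polynomial. -/
theorem unique [DecidableEq σ] (h : IsSeriesExtension L D) (h' : IsSeriesExtension L' D')
    (hD : D = D') : L = L' := by
  subst hD
  funext f
  ext β
  obtain ⟨S, hS⟩ := h.1 β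
  obtain ⟨S', hS'⟩ := h'.1 β
  set p := MvPowerSeries.trunc' R ((S ∪ S').sup fun γ => γ) f
  have hp : ∀ γ ∈ S ∪ S',
      MvPowerSeries.coeff γ f = MvPowerSeries.coeff γ (p : MvPowerSeries σ R) := by
    intro γ hγ
    rw [MvPolynomial.coeff_coe, MvPowerSeries.coeff_trunc',
      if_pos (Finset.le_sup (f := fun γ => γ) hγ)]
  rw [hS f p fun γ hγ => hp γ (Finset.mem_union_left _ hγ),
    hS' f p fun γ hγ => hp γ (Finset.mem_union_right _ hγ), h.2, h'.2]

end IsSeriesExtension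

end CoeffwiseExtension

theorem tsub_single_add_eq_iff {σ : Type*} {γ ν β : σ →₀ ℕ} {a : σ} (ha : a ∈ γ.support) :
    γ - Finsupp.single a 1 + ν = β ↔ ν ≤ β ∧ β - ν + Finsupp.single a 1 = γ := by
  have hle : Finsupp.single a 1 ≤ γ :=
    Finsupp.single_le_iff.2 (Nat.one_le_iff_ne_zero.2 (Finsupp.mem_support_iff.1 ha))
  constructor
  · rintro rfl
    exact ⟨le_add_self, by rw [add_tsub_cancel_right, tsub_add_cancel_of_le hle]⟩
  · rintro ⟨hν, rfl⟩
    rw [add_tsub_cancel_right, tsub_add_cancel_of_le hν]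

section Symbol

variable {σ R : Type*} [CommRing R]

/-- The coefficient at `β` of `c z^ν ∂_{z_a} f`. -/
noncomputable def mulPderivCoeff (c : R) (ν : σ →₀ ℕ) (a : σ) (β : σ →₀ ℕ)
    (f : MvPowerSeries σ R) : R :=
  if ν ≤ β then c * ((β - ν) a + 1 : ℕ) * MvPowerSeries.coeff (β - ν + Finsupp.single a 1) f
  else 0

/-- `L` acts on coefficients as the operator `Σ_a c_a z^{ν_a} ∂_{z_a}`, where the finite set `A`
contains every `a` that contributes to the coefficient at `β`. -/
def HasSymbol (L : MvPowerSeries σ R → MvPowerSeries σ R) (c : σ → R) (ν : σ → σ →₀ ℕ) : Prop :=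
  ∀ β, ∃ A : Finset σ, (∀ a, c a ≠ 0 → ν a ≤ β → a ∈ A) ∧
    ∀ f, MvPowerSeries.coeff β (L f) = ∑ a ∈ A, mulPderivCoeff (c a) (ν a) a β f

theorem mulPderivCoeff_tsub (c : R) (ν : σ →₀ ℕ) (a : σ) {μ β : σ →₀ ℕ} (h : μ ≤ β)
    (f : MvPowerSeries σ R) : mulPderivCoeff c ν a (β - μ) f = mulPderivCoeff c (μ + ν) a β f := by
  simp only [mulPderivCoeff, tsub_tsub, le_tsub_iff_left h]

theorem mulPderivCoeff_add_of_not_le (c : R) (ν : σ →₀ ℕ) (a : σ) {μ β : σ →₀ ℕ} (h : ¬μ ≤ β)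
    (f : MvPowerSeries σ R) : mulPderivCoeff c (μ + ν) a β f = 0 :=
  if_neg fun h' => h (le_trans le_self_add h')

theorem mulPderivCoeff_monomial [DecidableEq σ] (c : R) (ν : σ →₀ ℕ) (a : σ) (β γ : σ →₀ ℕ)
    (r : R) : mulPderivCoeff c ν a β (monomial γ r : MvPowerSeries σ R) =
      if ν ≤ β ∧ β - ν + Finsupp.single a 1 = γ then r * (γ a * c) else 0 := by
  simp only [mulPderivCoeff, MvPolynomial.coeff_coe, coeff_monomial]
  by_cases hν : ν ≤ β
  · by_cases hγ : β - ν + Finsupp.single a 1 = γ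
    · subst hγ
      simp [hν]
      ring
    · simp [hν, hγ, Ne.symm hγ]
  · simp [hν]

theorem coeff_mkDerivation_monomial [DecidableEq σ] (c : σ → R) (ν : σ → σ →₀ ℕ)
    (β γ : σ →₀ ℕ) (r : R) :
    MvPolynomial.coeff β (mkDerivation R (fun a => monomial (ν a) (c a)) (monomial γ r)) =
      ∑ a ∈ γ.support, if γ - Finsupp.single a 1 + ν a = β then r * (γ a * c a) else 0 := by
  simp [mkDerivation_monomial, Finsupp.sum, coeff_sum, monomial_mul, coeff_monomial,
    Finset.mul_sum]

theorem HasSymbol.isSeriesExtension [DecidableEq σ] {L : MvPowerSeries σ R → MvPowerSeries σ R}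
    {c : σ → R} {ν : σ → σ →₀ ℕ} (hL : HasSymbol L c ν)
    {D : Derivation R (MvPolynomial σ R) (MvPolynomial σ R)}
    (hD : ∀ a, D (X a) = monomial (ν a) (c a)) : IsSeriesExtension L D := by
  refine ⟨fun β => ?_, fun p => ?_⟩
  · obtain ⟨A, -, hLA⟩ := hL β
    refine ⟨A.image fun a => β - ν a + Finsupp.single a 1, fun f g hfg => ?_⟩
    simp only [hLA, mulPderivCoeff]
    refine Finset.sum_congr rfl fun a ha => ?_
    rw [hfg _ (Finset.mem_image_of_mem _ ha)]
  obtain rfl : D = mkDerivation R fun a => monomial (ν a) (c a) :=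
    derivation_ext fun a => by rw [hD, mkDerivation_X]
  ext β
  obtain ⟨A, hA, hLA⟩ := hL β
  rw [hLA, MvPolynomial.coeff_coe]
  induction p using MvPolynomial.induction_on' with
  | monomial γ r =>
    set t : σ → R := fun a =>
      if ν a ≤ β ∧ β - ν a + Finsupp.single a 1 = γ then r * (γ a * c a) else 0
    -- both sides are sums of `t` over sets containing its support
    have ht : ∀ a, t a ≠ 0 → a ∈ A ∩ γ.support := by
      intro a ha
      obtain ⟨h, ha⟩ := not_forall.1 (mt ite_eq_right_iff.2 ha)
      exact Finset.mem_inter.2 ⟨hA a (fun hc => ha (by simp [hc])) h.1,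
        Finsupp.mem_support_iff.2 fun hγ => ha (by simp [hγ])⟩
    have hright : ∀ a ∈ γ.support,
        (if γ - Finsupp.single a 1 + ν a = β then r * (γ a * c a) else 0) = t a :=
      fun a ha => by simp only [t, tsub_single_add_eq_iff ha]
    simp only [mulPderivCoeff_monomial, coeff_mkDerivation_monomial]
    rw [Finset.sum_congr rfl hright,
      ← Finset.sum_subset Finset.inter_subset_left fun a _ h => not_not.1 (mt (ht a) h),
      ← Finset.sum_subset Finset.inter_subset_right fun a _ h => not_not.1 (mt (ht a) h)]
  | add p q hp hq =>
    rw [map_add, MvPolynomial.coeff_add, ← hp, ← hq, ← Finset.sum_add_distrib]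
    refine Finset.sum_congr rfl fun a _ => ?_
    simp only [mulPderivCoeff, MvPolynomial.coe_add, map_add]
    split_ifs <;> simp [mul_add]

end Symbol

section Commutator

variable {R A : Type*} [CommRing R] [CommRing A] [Algebra R A] {D₁ D₂ : Derivation R A A}

theorem Derivation.comp_comm_of_lie_eq_zero (h : ⁅D₁, D₂⁆ = 0) : ⇑D₁ ∘ ⇑D₂ = ⇑D₂ ∘ ⇑D₁ :=
  funext fun a => sub_eq_zero.1 ((Derivation.commutator_apply a).symm.trans (by simp [h]))

theorem Derivation.comp_sub_comp_eq_lie :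
    (fun a => (⇑D₁ ∘ ⇑D₂) a - (⇑D₂ ∘ ⇑D₁) a) = ⇑⁅D₁, D₂⁆ :=
  funext fun a => (Derivation.commutator_apply a).symm

end Commutator

def N2.add10 (m : N2) : N2 := ⟨m.1 + (1, 0), add10_ne m.1⟩

def N2.add01 (m : N2) : N2 := ⟨m.1 + (0, 1), add01_ne m.1⟩

@[simp] theorem N2.add10_fst (m : N2) : m.add10.1.1 = m.1.1 + 1 := rfl
@[simp] theorem N2.add10_snd (m : N2) : m.add10.1.2 = m.1.2 := rfl
@[simp] theorem N2.add01_fst (m : N2) : m.add01.1.1 = m.1.1 := rfl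
@[simp] theorem N2.add01_snd (m : N2) : m.add01.1.2 = m.1.2 + 1 := rfl

theorem N2.add10_add01 (m : N2) : m.add01.add10 = m.add10.add01 :=
  Subtype.ext (add_right_comm _ _ _)

theorem N2.add10_injective : Function.Injective N2.add10 :=
  fun _ _ h => Subtype.ext (add_right_cancel (congrArg Subtype.val h))

theorem N2.add01_injective : Function.Injective N2.add01 :=
  fun _ _ h => Subtype.ext (add_right_cancel (congrArg Subtype.val h))

noncomputable def D0poly : Derivation ℝ (MvPolynomial Idx ℝ) (MvPolynomial Idx ℝ) :=
  mkDerivation ℝ (Sum.elim (fun k => ((k : ℝ) + 1) • X (Sum.inl (k + 1))) 0)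

noncomputable def Dpoly (n : ℕ × ℕ) : Derivation ℝ (MvPolynomial Idx ℝ) (MvPolynomial Idx ℝ) :=
  if h : n = (0, 0) then D0poly else pderiv (Sum.inr ⟨n, h⟩)

noncomputable def d1poly : Derivation ℝ (MvPolynomial Idx ℝ) (MvPolynomial Idx ℝ) :=
  mkDerivation ℝ (Sum.elim (fun k => ((k : ℝ) + 1) • (X (Sum.inr v10) * X (Sum.inl (k + 1))))
    fun m => ((m.1.1 : ℝ) + 1) • X (Sum.inr m.add10))

noncomputable def d2poly : Derivation ℝ (MvPolynomial Idx ℝ) (MvPolynomial Idx ℝ) :=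
  mkDerivation ℝ (Sum.elim (fun k => ((k : ℝ) + 1) • (X (Sum.inr v01) * X (Sum.inl (k + 1))))
    fun m => ((m.1.2 : ℝ) + 1) • X (Sum.inr m.add01))

@[simp] theorem Dpoly_X_inl (n : ℕ × ℕ) (k : ℕ) :
    Dpoly n (X (Sum.inl k)) = if n = (0, 0) then ((k : ℝ) + 1) • X (Sum.inl (k + 1)) else 0 := by
  by_cases h : n = (0, 0) <;> simp [Dpoly, D0poly, h, pderiv_X]

@[simp] theorem Dpoly_X_inr (n : ℕ × ℕ) (m : N2) :
    Dpoly n (X (Sum.inr m)) = if n = m.1 then 1 else 0 := by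
  by_cases h : n = (0, 0)
  · simp [Dpoly, D0poly, h, Ne.symm m.2]
  · simp [Dpoly, h, pderiv_X, Pi.single_apply, Subtype.ext_iff, eq_comm]

@[simp] theorem d1poly_X_inl (k : ℕ) :
    d1poly (X (Sum.inl k)) = ((k : ℝ) + 1) • (X (Sum.inr v10) * X (Sum.inl (k + 1))) := by
  simp [d1poly]

@[simp] theorem d1poly_X_inr (m : N2) :
    d1poly (X (Sum.inr m)) = ((m.1.1 : ℝ) + 1) • X (Sum.inr m.add10) := by
  simp [d1poly]

@[simp] theorem d2poly_X_inl (k : ℕ) :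
    d2poly (X (Sum.inl k)) = ((k : ℝ) + 1) • (X (Sum.inr v01) * X (Sum.inl (k + 1))) := by
  simp [d2poly]

@[simp] theorem d2poly_X_inr (m : N2) :
    d2poly (X (Sum.inr m)) = ((m.1.2 : ℝ) + 1) • X (Sum.inr m.add01) := by
  simp [d2poly]

theorem lie_Dpoly_Dpoly (n n' : ℕ × ℕ) : ⁅Dpoly n, Dpoly n'⁆ = 0 := by
  refine derivation_ext fun a => ?_
  rcases a with k | m
  · by_cases h : n = (0, 0) <;> by_cases h' : n' = (0, 0) <;>
      simp [Derivation.commutator_apply, h, h']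
  · by_cases h : n' = m.1 <;> by_cases h' : n = m.1 <;>
      simp [Derivation.commutator_apply, h, h']

theorem lie_d1poly_d2poly : ⁅d1poly, d2poly⁆ = 0 := by
  refine derivation_ext fun a => ?_
  rcases a with k | m
  · have h11 : v01.add10 = v10.add01 := rfl
    simp only [Derivation.commutator_apply, d1poly_X_inl, d2poly_X_inl, Derivation.leibniz,
      d1poly_X_inr, d2poly_X_inr, h11, smul_eq_C_mul]
    simp [v10, v01]
    ring
  · simp [Derivation.commutator_apply, N2.add10_add01, smul_smul, mul_comm]

theorem lie_Dpoly_d1poly (n : ℕ × ℕ) : ⁅Dpoly n, d1poly⁆ = (n.1 : ℝ) • Dpoly (n.1 - 1, n.2) := by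
  refine derivation_ext fun a => ?_
  obtain ⟨_ | n₁, n₂⟩ := n <;> rcases a with k | m <;>
    simp [Derivation.commutator_apply, Derivation.leibniz, Prod.ext_iff, apply_ite d1poly, v10] <;>
    split_ifs <;> simp_all

theorem lie_Dpoly_d2poly (n : ℕ × ℕ) : ⁅Dpoly n, d2poly⁆ = (n.2 : ℝ) • Dpoly (n.1, n.2 - 1) := by
  refine derivation_ext fun a => ?_
  obtain ⟨n₁, _ | n₂⟩ := n <;> rcases a with k | m <;>
    simp [Derivation.commutator_apply, Derivation.leibniz, Prod.ext_iff, apply_ite d2poly, v01] <;>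
    split_ifs <;> simp_all

theorem succ_inl_injective : Function.Injective fun k : ℕ => (Sum.inl (k + 1) : Idx) :=
  fun _ _ h => Nat.succ_injective (Sum.inl_injective h)

noncomputable def succIndices (β : MIdx) : Finset ℕ :=
  β.support.preimage _ succ_inl_injective.injOn

noncomputable def add10Indices (β : MIdx) : Finset N2 :=
  β.support.preimage _ (Sum.inr_injective.comp N2.add10_injective).injOn

noncomputable def add01Indices (β : MIdx) : Finset N2 :=
  β.support.preimage _ (Sum.inr_injective.comp N2.add01_injective).injOn

open Finsupp in
theorem D0coeff_eq_sum (f : PS) (β : MIdx) :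
    D0coeff f β = ∑ k ∈ succIndices β,
      mulPderivCoeff ((k : ℝ) + 1) (single (Sum.inl (k + 1)) 1) (Sum.inl k) β f := by
  rw [D0coeff, succIndices, ← Finset.sum_preimage _ _ succ_inl_injective.injOn]
  · refine Finset.sum_congr rfl fun k hk => ?_
    simp only [Finset.mem_preimage, Finsupp.mem_support_iff] at hk
    have hle : single (Sum.inl (k + 1) : Idx) 1 ≤ β := by
      rw [single_le_iff]; omega
    simp only [mulPderivCoeff, hle, ite_true, tsub_add_eq_add_tsub hle, tsub_apply, single_apply]
    simp
  · rintro ((_ | k) | m) - hk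
    · rfl
    · exact absurd ⟨k, rfl⟩ hk
    · rfl

open Finsupp in
theorem D0coeff_shift_eq_sum (v : N2) (f : PS) (β : MIdx) :
    (if 1 ≤ β (Sum.inr v) then D0coeff f (β - single (Sum.inr v) 1) else 0) =
      ∑ k ∈ succIndices (β - single (Sum.inr v) 1), mulPderivCoeff ((k : ℝ) + 1)
        (single (Sum.inr v) 1 + single (Sum.inl (k + 1)) 1) (Sum.inl k) β f := by
  split_ifs with hv
  · rw [D0coeff_eq_sum]
    exact Finset.sum_congr rfl fun k _ => mulPderivCoeff_tsub _ _ _ (single_le_iff.2 hv) f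
  · exact (Finset.sum_eq_zero fun k _ =>
      mulPderivCoeff_add_of_not_le _ _ _ (mt single_le_iff.1 hv) f).symm

open Finsupp in
theorem hasSymbol_D0series :
    HasSymbol D0series (Sum.elim (fun k => (k : ℝ) + 1) 0)
      (Sum.elim (fun k => single (Sum.inl (k + 1)) 1) 0) := by
  intro β
  refine ⟨(succIndices β).map Function.Embedding.inl, ?_, fun f => ?_⟩
  · rintro (k | m) hc hle
    · simpa [succIndices, single_le_iff, Nat.one_le_iff_ne_zero] using hle
    · exact absurd rfl hc
  · rw [Finset.sum_map, MvPowerSeries.coeff_apply]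
    exact D0coeff_eq_sum f β

theorem isSeriesExtension_D0series : IsSeriesExtension D0series D0poly :=
  hasSymbol_D0series.isSeriesExtension <| by
    rintro (k | m) <;> simp only [D0poly, mkDerivation_X, Sum.elim_inl, Sum.elim_inr,
      smul_eq_C_mul, C_mul_X_eq_monomial, Pi.zero_apply, map_zero]

theorem hasSymbol_DNseries (m : N2) : HasSymbol (DNseries m) (Pi.single (Sum.inr m) 1) 0 := by
  intro β
  refine ⟨{Sum.inr m}, fun a hc _ => ?_, fun f => ?_⟩
  · by_contra ha
    exact hc (Pi.single_eq_of_ne (by simpa using ha) 1)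
  · simp [DNseries, mulPderivCoeff, MvPowerSeries.coeff_apply]

theorem isSeriesExtension_DNseries (m : N2) :
    IsSeriesExtension (DNseries m) (pderiv (Sum.inr m)) :=
  (hasSymbol_DNseries m).isSeriesExtension fun a => by
    by_cases ha : a = Sum.inr m
    · subst ha; simp
    · simp [Pi.single_eq_of_ne ha]

theorem isSeriesExtension_Dseries (n : ℕ × ℕ) : IsSeriesExtension (Dseries n) (Dpoly n) := by
  by_cases h : n = (0, 0)
  · rw [show Dseries n = D0series from funext fun f => dif_pos h, Dpoly, dif_pos h]
    exact isSeriesExtension_D0series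
  · rw [show Dseries n = DNseries ⟨n, h⟩ from funext fun f => dif_neg h, Dpoly, dif_neg h]
    exact isSeriesExtension_DNseries ⟨n, h⟩

open Finsupp in
theorem hasSymbol_d1series :
    HasSymbol d1series (Sum.elim (fun k => (k : ℝ) + 1) fun m => (m.1.1 : ℝ) + 1)
      (Sum.elim (fun k => single (Sum.inr v10) 1 + single (Sum.inl (k + 1)) 1)
        fun m => single (Sum.inr m.add10) 1) := by
  intro β
  refine ⟨(succIndices (β - single (Sum.inr v10) 1)).disjSum (add10Indices β), ?_, fun f => ?_⟩
  · rintro (k | m) - hle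
    · have := hle (Sum.inl (k + 1))
      simp [succIndices] at this ⊢
      omega
    · simpa [add10Indices, single_le_iff, Nat.one_le_iff_ne_zero] using hle
  rw [Finset.sum_disjSum, MvPowerSeries.coeff_apply]
  show d1coeff f β = _
  rw [d1coeff, D0coeff_shift_eq_sum]
  congr 1
  · rw [add10Indices, ← Finset.sum_preimage _ _ (Sum.inr_injective.comp N2.add10_injective).injOn]
    · refine Finset.sum_congr rfl fun m hm => ?_
      simp only [Finset.mem_preimage, Finsupp.mem_support_iff, Function.comp_apply] at hm
      have hle : single (Sum.inr m.add10 : Idx) 1 ≤ β := by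
        rw [single_le_iff]; omega
      have hp : ((m.add10.1.1 - 1, m.add10.1.2) : ℕ × ℕ) ≠ (0, 0) ∧ 1 ≤ m.add10.1.1 :=
        ⟨by simpa using m.2, by simp⟩
      have hm' : (⟨(m.add10.1.1 - 1, m.add10.1.2), hp.1⟩ : N2) = m := by
        ext <;> simp
      simp only [Function.comp_apply, dif_pos hp, hm', Sum.elim_inr, mulPderivCoeff, hle, ite_true]
      simp
    · rintro (k | p) - hp
      · rfl
      · refine dif_neg fun h => hp ⟨⟨(p.1.1 - 1, p.1.2), h.1⟩, congrArg Sum.inr ?_⟩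
        ext <;> simp [N2.add10]
        omega

theorem isSeriesExtension_d1series : IsSeriesExtension d1series d1poly :=
  hasSymbol_d1series.isSeriesExtension <| by
    rintro (k | m) <;> simp only [d1poly, mkDerivation_X, Sum.elim_inl, Sum.elim_inr,
      smul_eq_C_mul, C_mul_X_eq_monomial]
    rw [← mul_assoc, C_mul_X_eq_monomial, X, monomial_mul, mul_one]

open Finsupp in
theorem hasSymbol_d2series :
    HasSymbol d2series (Sum.elim (fun k => (k : ℝ) + 1) fun m => (m.1.2 : ℝ) + 1)
      (Sum.elim (fun k => single (Sum.inr v01) 1 + single (Sum.inl (k + 1)) 1)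
        fun m => single (Sum.inr m.add01) 1) := by
  intro β
  refine ⟨(succIndices (β - single (Sum.inr v01) 1)).disjSum (add01Indices β), ?_, fun f => ?_⟩
  · rintro (k | m) - hle
    · have := hle (Sum.inl (k + 1))
      simp [succIndices] at this ⊢
      omega
    · simpa [add01Indices, single_le_iff, Nat.one_le_iff_ne_zero] using hle
  rw [Finset.sum_disjSum, MvPowerSeries.coeff_apply]
  show d2coeff f β = _
  rw [d2coeff, D0coeff_shift_eq_sum]
  congr 1
  · rw [add01Indices, ← Finset.sum_preimage _ _ (Sum.inr_injective.comp N2.add01_injective).injOn]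
    · refine Finset.sum_congr rfl fun m hm => ?_
      simp only [Finset.mem_preimage, Finsupp.mem_support_iff, Function.comp_apply] at hm
      have hle : single (Sum.inr m.add01 : Idx) 1 ≤ β := by
        rw [single_le_iff]; omega
      have hp : ((m.add01.1.1, m.add01.1.2 - 1) : ℕ × ℕ) ≠ (0, 0) ∧ 1 ≤ m.add01.1.2 :=
        ⟨by simpa using m.2, by simp⟩
      have hm' : (⟨(m.add01.1.1, m.add01.1.2 - 1), hp.1⟩ : N2) = m := by
        ext <;> simp
      simp only [Function.comp_apply, dif_pos hp, hm', Sum.elim_inr, mulPderivCoeff, hle, ite_true]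
      simp
    · rintro (k | p) - hp
      · rfl
      · refine dif_neg fun h => hp ⟨⟨(p.1.1, p.1.2 - 1), h.1⟩, congrArg Sum.inr ?_⟩
        ext <;> simp [N2.add01]
        omega

theorem isSeriesExtension_d2series : IsSeriesExtension d2series d2poly :=
  hasSymbol_d2series.isSeriesExtension <| by
    rintro (k | m) <;> simp only [d2poly, mkDerivation_X, Sum.elim_inl, Sum.elim_inr,
      smul_eq_C_mul, C_mul_X_eq_monomial]
    rw [← mul_assoc, C_mul_X_eq_monomial, X, monomial_mul, mul_one]

/-- **Commutators of the infinitesimal generators of shift and constant tilt.** -/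
theorem stmt2 :
    (∀ n n' : ℕ × ℕ, ∀ f : PS, Dseries n (Dseries n' f) = Dseries n' (Dseries n f)) ∧
    (∀ f : PS, d1series (d2series f) = d2series (d1series f)) ∧
    (∀ n : ℕ × ℕ, ∀ f : PS,
        Dseries n (d1series f) - d1series (Dseries n f)
          = (n.1 : ℝ) • Dseries (n.1 - 1, n.2) f) ∧
    (∀ n : ℕ × ℕ, ∀ f : PS,
        Dseries n (d2series f) - d2series (Dseries n f)
          = (n.2 : ℝ) • Dseries (n.1, n.2 - 1) f) := by
  have hD := isSeriesExtension_Dseries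
  have h₁ := isSeriesExtension_d1series
  have h₂ := isSeriesExtension_d2series
  refine ⟨fun n n' f => ?_, fun f => ?_, fun n f => ?_, fun n f => ?_⟩
  · refine congrFun (((hD n).comp (hD n')).unique ((hD n').comp (hD n)) ?_) f
    exact Derivation.comp_comm_of_lie_eq_zero (lie_Dpoly_Dpoly n n')
  · refine congrFun ((h₁.comp h₂).unique (h₂.comp h₁) ?_) f
    exact Derivation.comp_comm_of_lie_eq_zero lie_d1poly_d2poly
  · refine congrFun ((((hD n).comp h₁).sub (h₁.comp (hD n))).unique ((hD _).smul (n.1 : ℝ)) ?_) f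
    rw [Derivation.comp_sub_comp_eq_lie, lie_Dpoly_d1poly]
    rfl
  · refine congrFun ((((hD n).comp h₂).sub (h₂.comp (hD n))).unique ((hD _).smul (n.2 : ℝ)) ?_) f
    rw [Derivation.comp_sub_comp_eq_lie, lie_Dpoly_d2poly]
    rfl
end

section
/- Invariance of the dual model space. Let T̃* ⊂ ℝ[[z_k,z_𝐧]] be the set of power series whose z^γ-coefficient vanishes unless [γ] ≥ 0, and let T* ⊂ ℝ[[z_k,z_𝐧]] be the set of power series whose z^γ-coefficient vanishes unless [γ] ≥ 0 or γ = e_𝐧 for some 𝐧 ≠ 0. Then every operator D in the family {z^γ·D^(𝐧) : [γ] ≥ 0, 𝐧 ∈ ℕ²} ∪ {∂₁, ∂₂} satisfies D(T̃*) ⊆ T̃* and D(T*) ⊆ T*. -/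
open MvPolynomial

/-!
Every generator changes the bracket `[·]` of a multi-index in a controlled way. The derivations
`D^(0)` and `∂_{z_𝐧}` raise it by one, so they map `T*` into `T̃*`: the exceptional indices `e_𝐧`
have bracket `-1` and are lifted to `0`, while `D^(0)` never sees them since they contain no `z_k`.
Multiplying by `z^γ` with `[γ] ≥ 0` does not lower the bracket. The operators `∂₁, ∂₂` preserve it,
and a nonzero coefficient of `∂ᵢ f` at `β` comes from a coefficient of `f` which can be an
exceptional `e_𝐦` only if `β` is exceptional as well.
-/

open Finsupp

lemma brk_add (a b : MIdx) : brk (a + b) = brk a + brk b := by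
  unfold brk
  apply sum_add_index' <;> intro i <;> rcases i with k | m <;> intros <;> simp <;> ring

lemma brk_zero : brk 0 = 0 := sum_zero_index

lemma brk_tsub {a b : MIdx} (h : b ≤ a) : brk (a - b) = brk a - brk b := by
  conv_rhs => rw [← tsub_add_cancel_of_le h, brk_add]
  ring

@[simp]
lemma brk_single_inl (k n : ℕ) : brk (single (Sum.inl k) n) = k * n := by
  simp [brk, sum_single_index]

@[simp]
lemma brk_single_inr (m : N2) (n : ℕ) : brk (single (Sum.inr m) n) = -n := by
  simp [brk, sum_single_index]

lemma eq_zero_of_add_single_eq_single {a : MIdx} {i j : Idx}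
    (h : a + single i 1 = single j 1) : a = 0 := by
  have hdeg := congrArg degree h
  simp only [map_add, degree_single, add_eq_right] at hdeg
  exact (degree_eq_zero_iff a).1 hdeg

lemma Ttilde_subset_Tstar : Ttilde ⊆ Tstar := fun _ hf γ hγ => Or.inl (hf γ hγ)

def HasSourceCoeff (f : PS) (β : MIdx) : Prop :=
  ∃ δ : MIdx, MvPowerSeries.coeff δ f ≠ 0 ∧ brk δ = brk β ∧
    ((∃ m : N2, δ = single (Sum.inr m) 1) → ∃ m : N2, β = single (Sum.inr m) 1)

lemma mapsTo_Ttilde_of_hasSourceCoeff {T : PS → PS}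
    (hT : ∀ f β, MvPowerSeries.coeff β (T f) ≠ 0 → HasSourceCoeff f β) :
    Set.MapsTo T Ttilde Ttilde := by
  intro f hf β hβ
  obtain ⟨δ, hδ, hbrk, -⟩ := hT f β hβ
  exact hbrk ▸ hf δ hδ

lemma mapsTo_Tstar_of_hasSourceCoeff {T : PS → PS}
    (hT : ∀ f β, MvPowerSeries.coeff β (T f) ≠ 0 → HasSourceCoeff f β) :
    Set.MapsTo T Tstar Tstar := by
  intro f hf β hβ
  obtain ⟨δ, hδ, hbrk, hexc⟩ := hT f β hβ
  exact (hf δ hδ).imp (hbrk ▸ ·) hexc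

section Coefficients

variable {f : PS} {β : MIdx}

lemma exists_coeff_ne_zero_of_D0coeff_ne_zero (h : D0coeff f β ≠ 0) :
    ∃ δ : MIdx, MvPowerSeries.coeff δ f ≠ 0 ∧ brk δ + 1 = brk β ∧
      ∀ m : N2, δ ≠ single (Sum.inr m) 1 := by
  obtain ⟨i, hi, hterm⟩ := Finset.exists_ne_zero_of_sum_ne_zero h
  rcases i with (_ | k) | m
  · exact absurd rfl hterm
  · have hle : single (Sum.inl (k + 1) : Idx) 1 ≤ β :=
      single_le_iff.2 (Nat.one_le_iff_ne_zero.2 (mem_support_iff.1 hi))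
    refine ⟨β - single (Sum.inl (k + 1)) 1 + single (Sum.inl k) 1, ?_, ?_, ?_⟩
    · rw [tsub_add_eq_add_tsub hle]
      exact right_ne_zero_of_mul hterm
    · rw [brk_add, brk_tsub hle]
      simp only [brk_single_inl]
      push_cast
      ring
    · intro m hm
      have := congrArg (· (Sum.inl k)) hm
      simp at this
  · exact absurd rfl hterm

lemma Dseries_mem_Ttilde (n : ℕ × ℕ) (hf : f ∈ Tstar) : Dseries n f ∈ Ttilde := by
  intro β hβ
  rw [MvPowerSeries.coeff_apply, Dseries] at hβ
  split_ifs at hβ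
  · obtain ⟨δ, hδ, hbrk, hnot⟩ := exists_coeff_ne_zero_of_D0coeff_ne_zero hβ
    rcases hf δ hδ with hpos | ⟨m, hm⟩
    · omega
    · exact absurd hm (hnot m)
  · rcases hf _ (right_ne_zero_of_mul hβ) with hpos | ⟨m, hm⟩
    · rw [brk_add, brk_single_inr] at hpos
      omega
    · rw [eq_zero_of_add_single_eq_single hm, brk_zero]

lemma monomial_mul_mem_Ttilde {γ : MIdx} (hγ : 0 ≤ brk γ) {g : PS} (hg : g ∈ Ttilde) :
    MvPowerSeries.monomial γ 1 * g ∈ Ttilde := by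
  intro β hβ
  rw [MvPowerSeries.coeff_monomial_mul] at hβ
  split_ifs at hβ with hle
  · have := hg _ (right_ne_zero_of_mul hβ)
    rw [brk_tsub hle] at this
    omega
  · exact absurd rfl hβ

lemma opOf_mem_Ttilde {γ : MIdx} (hγ : 0 ≤ brk γ) (n : ℕ × ℕ) (hf : f ∈ Tstar) :
    opOf γ n f ∈ Ttilde :=
  monomial_mul_mem_Ttilde hγ (Dseries_mem_Ttilde n hf)

lemma hasSourceCoeff_of_D0coeff_ne_zero {v : N2} (hv : single (Sum.inr v) 1 ≤ β)
    (h : D0coeff f (β - single (Sum.inr v) 1) ≠ 0) : HasSourceCoeff f β := by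
  obtain ⟨δ, hδ, hbrk, hnot⟩ := exists_coeff_ne_zero_of_D0coeff_ne_zero h
  refine ⟨δ, hδ, ?_, fun ⟨m, hm⟩ => absurd hm (hnot m)⟩
  rw [brk_tsub hv, brk_single_inr] at hbrk
  omega

lemma hasSourceCoeff_of_coeff_shift_ne_zero {p q : N2} (hp : single (Sum.inr p) 1 ≤ β)
    (h : MvPowerSeries.coeff (β - single (Sum.inr p) 1 + single (Sum.inr q) 1) f ≠ 0) :
    HasSourceCoeff f β := by
  refine ⟨_, h, ?_, fun ⟨m, hm⟩ => ⟨p, ?_⟩⟩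
  · rw [brk_add, brk_tsub hp]
    simp
  · exact le_antisymm (tsub_eq_zero_iff_le.1 (eq_zero_of_add_single_eq_single hm)) hp

lemma hasSourceCoeff_of_d1coeff_ne_zero (h : d1coeff f β ≠ 0) : HasSourceCoeff f β := by
  unfold d1coeff at h
  by_cases hD0 : (if 1 ≤ β (Sum.inr v10) then
      D0coeff f (β - single (Sum.inr v10) 1) else 0) = 0
  · rw [hD0, zero_add] at h
    obtain ⟨i, hi, hterm⟩ := Finset.exists_ne_zero_of_sum_ne_zero h
    rcases i with k | p
    · exact absurd rfl hterm
    · dsimp only at hterm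
      split_ifs at hterm
      · exact hasSourceCoeff_of_coeff_shift_ne_zero
          (single_le_iff.2 (Nat.one_le_iff_ne_zero.2 (mem_support_iff.1 hi)))
          (right_ne_zero_of_mul hterm)
      · exact absurd rfl hterm
  · split_ifs at hD0 with hv
    · exact hasSourceCoeff_of_D0coeff_ne_zero (single_le_iff.2 hv) hD0
    · exact absurd rfl hD0

lemma hasSourceCoeff_of_d2coeff_ne_zero (h : d2coeff f β ≠ 0) : HasSourceCoeff f β := by
  unfold d2coeff at h
  by_cases hD0 : (if 1 ≤ β (Sum.inr v01) then
      D0coeff f (β - single (Sum.inr v01) 1) else 0) = 0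
  · rw [hD0, zero_add] at h
    obtain ⟨i, hi, hterm⟩ := Finset.exists_ne_zero_of_sum_ne_zero h
    rcases i with k | p
    · exact absurd rfl hterm
    · dsimp only at hterm
      split_ifs at hterm
      · exact hasSourceCoeff_of_coeff_shift_ne_zero
          (single_le_iff.2 (Nat.one_le_iff_ne_zero.2 (mem_support_iff.1 hi)))
          (right_ne_zero_of_mul hterm)
      · exact absurd rfl hterm
  · split_ifs at hD0 with hv
    · exact hasSourceCoeff_of_D0coeff_ne_zero (single_le_iff.2 hv) hD0
    · exact absurd rfl hD0

end Coefficients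

/-- **Invariance of the dual model space** under the generators. -/
theorem stmt7 :
    (∀ (γ : MIdx) (n : ℕ × ℕ), 0 ≤ brk γ →
        Set.MapsTo (opOf γ n) Ttilde Ttilde ∧ Set.MapsTo (opOf γ n) Tstar Tstar) ∧
    (Set.MapsTo d1series Ttilde Ttilde ∧ Set.MapsTo d1series Tstar Tstar) ∧
    (Set.MapsTo d2series Ttilde Ttilde ∧ Set.MapsTo d2series Tstar Tstar) := by
  have hd1 : ∀ f β, MvPowerSeries.coeff β (d1series f) ≠ 0 → HasSourceCoeff f β :=
    fun _ _ h => hasSourceCoeff_of_d1coeff_ne_zero h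
  have hd2 : ∀ f β, MvPowerSeries.coeff β (d2series f) ≠ 0 → HasSourceCoeff f β :=
    fun _ _ h => hasSourceCoeff_of_d2coeff_ne_zero h
  refine ⟨fun γ n hγ => ⟨?_, ?_⟩, ⟨mapsTo_Ttilde_of_hasSourceCoeff hd1,
    mapsTo_Tstar_of_hasSourceCoeff hd1⟩, mapsTo_Ttilde_of_hasSourceCoeff hd2,
    mapsTo_Tstar_of_hasSourceCoeff hd2⟩
  · exact fun f hf => opOf_mem_Ttilde hγ n (Ttilde_subset_Tstar hf)
  · exact fun f hf => Ttilde_subset_Tstar (opOf_mem_Ttilde hγ n hf)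
end

section
/- Composition rule for the structure group in its dual realization (Proposition exp01, parts iii and vi). Suppose Γ realizes the family (π^(𝐧))_{𝐧∈ℕ²} and Γ′ realizes the family (π′^(𝐧))_{𝐧∈ℕ²}. Then the composition Γ∘Γ′ realizes the family (π̄^(𝐧))_{𝐧∈ℕ²} given by π̄^(𝐧) := π^(𝐧) + Γ(π′^(𝐧)). -/
open MvPolynomial

/-!
Put `z(t) = ∑ₘ z_m tᵐ`. The `z_k`-clause of `Realizes Γ π` says that `Γ z_k` is the `k`-th Taylor
coefficient of `z(t + π^(0))`: on the generating series, `Γ` acts as translation by `π^(0)`.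
Applying `Γ` to the realization of `Γ'` turns translation by `π'^(0)` into translation by
`Γ(π'^(0))`, and the two translations compose to translation by `π^(0) + Γ(π'^(0))`. In terms of
coefficients this is the regrouping of a double series along antidiagonals, which is legitimate
because in `ℝ[[z]]` each coefficient of the double series has only finitely many nonzero terms.
The `z_𝐧`-clause is immediate.
-/

open Finset

theorem Nat.choose_mul_choose_add (n l j : ℕ) :
    (n + l).choose n * (n + l + j).choose (n + l) = (n + l + j).choose n * (l + j).choose l := by
  have h := Nat.choose_mul (n := n + l + j) (k := n + l) (s := n) (by omega)
  rw [mul_comm, Nat.add_sub_cancel_left, add_assoc, Nat.add_sub_cancel_left] at h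
  simpa only [add_assoc] using h

section TaylorShift

variable {R : Type*} [CommSemiring R] [TopologicalSpace R]

-- `∑ₙ y n tⁿ = ∑ₘ x m (t + a)ᵐ`, coefficientwise.
def IsTaylorShift (a : R) (x y : ℕ → R) : Prop :=
  ∀ n, HasSum (fun j => ((n + j).choose n : R) * a ^ j * x (n + j)) (y n)

theorem isTaylorShift_iff_hasSum_smul {𝕜 : Type*} [Semiring 𝕜] [Module 𝕜 R] {a : R}
    {x y : ℕ → R} :
    IsTaylorShift a x y ↔
      ∀ n, HasSum (fun j => ((n + j).choose n : 𝕜) • (a ^ j * x (n + j))) (y n) := by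
  simp only [IsTaylorShift, Nat.cast_smul_eq_nsmul, nsmul_eq_mul, mul_assoc]

theorem IsTaylorShift.map {S F : Type*} [CommSemiring S] [TopologicalSpace S] [FunLike F R S]
    [RingHomClass F R S] {f : F} (hf : Continuous f) {a : R} {x y : ℕ → R}
    (h : IsTaylorShift a x y) : IsTaylorShift (f a) (f ∘ x) (f ∘ y) := fun n => by
  simpa [Function.comp_def] using (h n).map f hf

variable [IsTopologicalSemiring R] [T3Space R]

theorem IsTaylorShift.trans {a b : R} {x y z : ℕ → R} (hxy : IsTaylorShift a x y)
    (hyz : IsTaylorShift b y z)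
    (hx : ∀ (n : ℕ) (c : ℕ × ℕ → R), Summable fun p => c p * x (n + p.1 + p.2)) :
    IsTaylorShift (a + b) x z := by
  intro n
  set c : ℕ × ℕ → R := fun p =>
    ((n + p.1).choose n * (n + p.1 + p.2).choose (n + p.1) : ℕ) * (b ^ p.1 * a ^ p.2)
  have hrow : ∀ l, HasSum (fun j => c (l, j) * x (n + l + j))
      (((n + l).choose n : R) * b ^ l * y (n + l)) := fun l => by
    refine ((hxy (n + l)).mul_left (((n + l).choose n : R) * b ^ l)).congr_fun fun j => ?_
    simp only [c]; push_cast; ring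
  have hsum : HasSum (fun p : ℕ × ℕ => c p * x (n + p.1 + p.2)) (z n) := by
    obtain ⟨s, hs⟩ := hx n c
    rwa [(hyz n).unique (hs.prod_fiberwise hrow)]
  have hdiag : ∀ m, ∑ p ∈ antidiagonal m, c p * x (n + p.1 + p.2) =
      ((n + m).choose n : R) * (a + b) ^ m * x (n + m) := fun m => by
    rw [add_comm a, (Commute.all b a).add_pow', mul_sum, sum_mul]
    refine sum_congr rfl fun p hp => ?_
    obtain rfl : p.1 + p.2 = m := mem_antidiagonal.1 hp
    simp only [c, Nat.choose_mul_choose_add, Nat.cast_mul, nsmul_eq_mul, ← add_assoc]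
    ring
  refine ((HasAntidiagonal.sigmaAntidiagonalEquivProd : (Σ m : ℕ, antidiagonal m) ≃ ℕ × ℕ)
    |>.hasSum_iff.2 hsum).sigma fun m => ?_
  rw [← hdiag, ← sum_coe_sort]
  exact hasSum_fintype _

end TaylorShift

section PiTopology

open MvPowerSeries.WithPiTopology

theorem MvPowerSeries.summable_mul_X {σ R ι : Type*} [Semiring R] [TopologicalSpace R]
    (c : ι → MvPowerSeries σ R) (φ : ι → σ) (hφ : ∀ i, (φ ⁻¹' {i}).Finite) :
    Summable fun t => c t * X (φ t) := by
  classical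
  refine summable_iff_summable_coeff.2 fun d => summable_of_hasFiniteSupport ?_
  refine (d.support.finite_toSet.biUnion fun i _ => hφ i).subset fun t ht => ?_
  simp only [Function.mem_support, X_def, coeff_mul_monomial, ne_eq, ite_eq_right_iff,
    Classical.not_imp, Finsupp.single_le_iff] at ht
  simpa [Nat.one_le_iff_ne_zero] using ht.1

end PiTopology

noncomputable abbrev zk (k : ℕ) : PS := MvPowerSeries.X (Sum.inl k)

theorem summable_mul_zk (n : ℕ) (c : ℕ × ℕ → PS) :
    Summable fun p => c p * zk (n + p.1 + p.2) := by
  refine MvPowerSeries.summable_mul_X c _ fun i => ?_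
  rcases i with m | m
  · refine (antidiagonal (m - n)).finite_toSet.subset fun p hp => ?_
    simp only [Set.mem_preimage, Set.mem_singleton_iff, Sum.inl.injEq] at hp
    rw [mem_coe, HasAntidiagonal.mem_antidiagonal]
    omega
  · exact Set.finite_empty.subset fun p hp => Sum.inl_ne_inr hp

instance : IsTopologicalRing PS := @MvPowerSeries.WithPiTopology.instIsTopologicalRing Idx ℝ _ _ _

instance : T3Space PS := inferInstanceAs (T3Space ((Idx →₀ ℕ) → ℝ))

/-- **Composition rule for the structure group in its dual realization.** -/
theorem stmt9 (Γ Γ' : PS →ₐ[ℝ] PS) (π π' : ℕ × ℕ → PS)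
    (hΓ : Realizes Γ π) (hΓ' : Realizes Γ' π') :
    Realizes (Γ.comp Γ') (fun n => π n + Γ (π' n)) := by
  obtain ⟨hc, hX, hk⟩ := hΓ
  obtain ⟨hc', hX', hk'⟩ := hΓ'
  refine ⟨hc.comp hc', fun m => ?_, ?_⟩
  · simp only [AlgHom.comp_apply, hX', map_add, hX, add_assoc]
  have hxy : IsTaylorShift (π (0, 0)) zk (Γ ∘ zk) := isTaylorShift_iff_hasSum_smul.2 hk
  have hyz : IsTaylorShift (π' (0, 0)) zk (Γ' ∘ zk) := isTaylorShift_iff_hasSum_smul.2 hk'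
  have hxz : IsTaylorShift (π (0, 0) + Γ (π' (0, 0))) zk (Γ.comp Γ' ∘ zk) :=
    hxy.trans (hyz.map hc) summable_mul_zk
  exact ((isTaylorShift_iff_hasSum_smul (𝕜 := ℝ)).1 hxz :)
end
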